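/- arXiv:2110.01203 — 7 statements merged into one kernel-verified Lean document; each statement's English description precedes it below -/
import Mathlib

section
/- Let G be a real p×q matrix. There exists a matrix F ∈ ℝ^{q×p} such that the spectral radius of I_q − F·G is strictly less than 1 if and only if G has full column rank (rank G = q). -/
open Matrix

/-!
If `ρ(I - F G) < 1`, then `1` is not in the spectrum of `I - F G`, so `F G` is invertible and
`(F G)⁻¹ F` is a left inverse of `G`; conversely, for a left inverse `F` of `G` we get
`I - F G = 0`. Over a field, a matrix has a left inverse exactly when its column map is
injective, i.e. when it has full column rank.
-/

/-- Spectral radius of a real square matrix: the spectral radius of its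
complexification, i.e. the sup of the norms of its complex eigenvalues. -/
noncomputable def specRad {n : ℕ} (A : Matrix (Fin n) (Fin n) ℝ) : ENNReal :=
  spectralRadius ℂ (A.map (algebraMap ℝ ℂ))

theorem isUnit_of_spectralRadius_one_sub_lt_one {𝕜 A : Type*} [NormedField 𝕜] [Ring A]
    [Algebra 𝕜 A] {a : A} (h : spectralRadius 𝕜 (1 - a) < 1) : IsUnit a := by
  have hone : (1 : 𝕜) ∉ spectrum 𝕜 (1 - a) := fun hmem =>
    h.not_ge <| by
      simpa using (le_iSup₂ (α := ENNReal) 1 hmem : (‖(1 : 𝕜)‖₊ : ENNReal) ≤ _)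
  simpa using spectrum.notMem_iff.mp hone

theorem Matrix.isUnit_of_isUnit_map {n K L : Type*} [Fintype n] [DecidableEq n] [Field K]
    [CommRing L] [Nontrivial L] {f : K →+* L} {A : Matrix n n K} (h : IsUnit (A.map f)) :
    IsUnit A := by
  rw [isUnit_iff_isUnit_det, ← RingHom.mapMatrix_apply, ← f.map_det] at h
  rw [isUnit_iff_isUnit_det, isUnit_iff_ne_zero]
  rintro hdet
  simp [hdet] at h

theorem Matrix.exists_mul_eq_one_iff_rank_eq_card {m n K : Type*} [Field K] [Fintype m]
    [Fintype n] [DecidableEq n] (A : Matrix m n K) :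
    (∃ B : Matrix n m K, B * A = 1) ↔ A.rank = Fintype.card n := by
  classical
  constructor
  · rintro ⟨B, hBA⟩
    refine le_antisymm A.rank_le_card_width ?_
    calc Fintype.card n = (B * A).rank := by rw [hBA, rank_one]
      _ ≤ A.rank := rank_mul_le_right B A
  · intro hA
    have hker : LinearMap.ker A.mulVecLin = ⊥ := by
      have := A.mulVecLin.finrank_range_add_finrank_ker
      rw [← rank, hA, Module.finrank_fintype_fun_eq_card] at this
      exact Submodule.finrank_eq_zero.mp (by omega)
    obtain ⟨g, hg⟩ := A.mulVecLin.exists_leftInverse_of_injective hker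
    refine ⟨LinearMap.toMatrix' g, ?_⟩
    rw [← LinearMap.toMatrix'_toLin' A, ← LinearMap.toMatrix'_comp, Matrix.toLin'_apply', hg,
      LinearMap.toMatrix'_id]

theorem exists_specRad_one_sub_mul_lt_one_iff {p q : ℕ} (G : Matrix (Fin p) (Fin q) ℝ) :
    (∃ F : Matrix (Fin q) (Fin p) ℝ, specRad (1 - F * G) < 1) ↔
      ∃ F : Matrix (Fin q) (Fin p) ℝ, F * G = 1 := by
  constructor
  · rintro ⟨F, hF⟩
    have hFG : IsUnit (F * G) := by
      refine isUnit_of_isUnit_map (f := algebraMap ℝ ℂ)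
        (isUnit_of_spectralRadius_one_sub_lt_one (𝕜 := ℂ) ?_)
      simpa [specRad, Matrix.map_sub, Matrix.map_one] using hF
    refine ⟨(F * G)⁻¹ * F, ?_⟩
    rw [Matrix.mul_assoc, nonsing_inv_mul _ ((isUnit_iff_isUnit_det _).mp hFG)]
  · rintro ⟨F, hFG⟩
    refine ⟨F, ?_⟩
    simp [specRad, hFG]

/-- There exists `F` with `ρ(I_q − F·G) < 1` iff `G` has full column rank. -/
theorem stmt0 {p q : ℕ} (G : Matrix (Fin p) (Fin q) ℝ) :
    (∃ F : Matrix (Fin q) (Fin p) ℝ, specRad (1 - F * G) < 1) ↔ G.rank = q := by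
  rw [exists_specRad_one_sub_mul_lt_one_iff, exists_mul_eq_one_iff_rank_eq_card, Fintype.card_fin]
end

section
/- Let G be a real p×q matrix. There exists a matrix F ∈ ℝ^{q×p} such that the spectral radius of I_p − G·F is strictly less than 1 if and only if G has full row rank (rank G = p). -/
/-!
If `ρ(I - GF) < 1` then `1` is not an eigenvalue of `I - GF`, so `GF` is invertible and
`rank G ≥ rank (GF) = p`. Conversely, a `G` of full row rank is surjective, hence has a right
inverse `F`, and then `I - GF = 0`.
-/

open Matrix

theorem isUnit_one_sub_of_spectralRadius_lt_one {𝕜 A : Type*} [NormedField 𝕜] [Ring A]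
    [Algebra 𝕜 A] {a : A} (h : spectralRadius 𝕜 a < 1) : IsUnit (1 - a) := by
  have := spectrum.mem_resolventSet_of_spectralRadius_lt (k := (1 : 𝕜)) (by simpa using h)
  rwa [spectrum.mem_resolventSet_iff, map_one] at this

namespace Matrix

variable {m n K L : Type*} [Fintype m] [Fintype n]

theorem isUnit_map_iff [DecidableEq n] [Field K] [CommRing L] [Nontrivial L] (f : K →+* L)
    (A : Matrix n n K) : IsUnit (A.map f) ↔ IsUnit A := by
  rw [isUnit_iff_isUnit_det, isUnit_iff_isUnit_det, ← RingHom.mapMatrix_apply,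
    ← RingHom.map_det, _root_.isUnit_map_iff]

theorem rank_eq_card_of_isUnit_mul [DecidableEq m] [CommRing K] [StrongRankCondition K]
    {A : Matrix m n K} {B : Matrix n m K} (h : IsUnit (A * B)) : A.rank = Fintype.card m :=
  le_antisymm A.rank_le_card_height <| (rank_of_isUnit _ h).symm.trans_le (rank_mul_le_left A B)

theorem exists_mul_eq_one_of_rank_eq_card [DecidableEq m] [Field K] {A : Matrix m n K}
    (h : A.rank = Fintype.card m) : ∃ B : Matrix n m K, A * B = 1 := by
  classical
  have hsurj : LinearMap.range A.mulVecLin = ⊤ :=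
    Submodule.eq_top_of_finrank_eq (by rw [← rank, h, Module.finrank_fintype_fun_eq_card])
  obtain ⟨g, hg⟩ := A.mulVecLin.exists_rightInverse_of_surjective hsurj
  refine ⟨LinearMap.toMatrix' g, toLin'.injective ?_⟩
  rw [toLin'_mul, toLin'_toMatrix', toLin'_one, ← hg]
  rfl

end Matrix

theorem isUnit_of_specRad_one_sub_lt_one {n : ℕ} {A : Matrix (Fin n) (Fin n) ℝ}
    (h : specRad (1 - A) < 1) : IsUnit A := by
  have := isUnit_one_sub_of_spectralRadius_lt_one h
  rw [Matrix.map_sub _ (map_sub _), Matrix.map_one _ (map_zero _) (map_one _),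
    sub_sub_cancel] at this
  exact (Matrix.isUnit_map_iff _ A).mp this

/-- There exists `F` with `ρ(I_p − G·F) < 1` iff `G` has full row rank. -/
theorem stmt1 {p q : ℕ} (G : Matrix (Fin p) (Fin q) ℝ) :
    (∃ F : Matrix (Fin q) (Fin p) ℝ, specRad (1 - G * F) < 1) ↔ G.rank = p := by
  constructor
  · rintro ⟨F, hF⟩
    simpa using rank_eq_card_of_isUnit_mul (isUnit_of_specRad_one_sub_lt_one hF)
  · intro h
    obtain ⟨F, hF⟩ := exists_mul_eq_one_of_rank_eq_card (A := G) (by simpa using h)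
    exact ⟨F, by simp [hF, specRad]⟩
end

section
/- Let G ∈ ℝ^{p×q} have full column rank, let F ∈ ℝ^{q×p} satisfy ρ(I_q − F·G) < 1, and suppose F = X·Gᵀ for some X ∈ ℝ^{q×q}. Then (F·G)^{-1}·F = (Gᵀ·G)^{-1}·Gᵀ; in particular, the limit of the iteration U_{k+1} = (I_q − F·G)·U_k + F·Y_d equals the unique least squares solution (Gᵀ·G)^{-1}·Gᵀ·Y_d of Y_d = G·U. -/
open Matrix

lemma isUnit_of_rank_eq {q : ℕ} (A : Matrix (Fin q) (Fin q) ℝ) (h : A.rank = q) :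
    IsUnit A := by
  rw [← Matrix.mulVec_surjective_iff_isUnit]
  have htop : LinearMap.range A.mulVecLin = ⊤ := by
    apply Submodule.eq_top_of_finrank_eq
    rw [← Matrix.rank, h]
    simp [Module.finrank_pi]
  intro v
  exact LinearMap.range_eq_top.mp htop v

/-- If `G` has full column rank, `ρ(I_q − F·G) < 1`, and `F = X·Gᵀ` for some `X`,
then `(F·G)⁻¹·F = (Gᵀ·G)⁻¹·Gᵀ`; in particular the limit of the iteration is the
unique least squares solution `(Gᵀ·G)⁻¹·Gᵀ·Y_d`. -/
theorem stmt6 {p q : ℕ} (G : Matrix (Fin p) (Fin q) ℝ) (F : Matrix (Fin q) (Fin p) ℝ)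
    (hrank : G.rank = q) (hρ : specRad (1 - F * G) < 1)
    (hP : ∃ X : Matrix (Fin q) (Fin q) ℝ, F = X * Gᵀ) :
    (F * G)⁻¹ * F = (Gᵀ * G)⁻¹ * Gᵀ := by
  obtain ⟨X, rfl⟩ := hP
  have hGtG : IsUnit (Gᵀ * G) := by
    apply isUnit_of_rank_eq
    rw [Matrix.rank_transpose_mul_self, hrank]
  have hFG : IsUnit (X * Gᵀ * G) := by
    by_contra h
    have hdet : ¬ IsUnit ((X * Gᵀ * G).map (algebraMap ℝ ℂ)) := by
      rw [Matrix.isUnit_iff_isUnit_det] at h ⊢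
      rw [← RingHom.mapMatrix_apply, ← RingHom.map_det]
      simp only [isUnit_iff_ne_zero, ne_eq, map_eq_zero] at h ⊢
      exact h
    have h1 : (1 : ℂ) ∈ spectrum ℂ ((1 - X * Gᵀ * G).map (algebraMap ℝ ℂ)) := by
      rw [spectrum.mem_iff]
      have hm : (1 - X * Gᵀ * G).map (algebraMap ℝ ℂ)
          = 1 - (X * Gᵀ * G).map (algebraMap ℝ ℂ) := by
        ext i j
        simp only [Matrix.map_apply, Matrix.sub_apply, Matrix.one_apply, map_sub]
        split <;> simp
      rw [hm]
      simpa using hdet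
    have hle : (1 : ENNReal) ≤ specRad (1 - X * Gᵀ * G) := by
      have := le_iSup₂ (α := ENNReal) (f := fun k (_ : k ∈ spectrum ℂ ((1 - X * Gᵀ * G).map (algebraMap ℝ ℂ))) => (‖k‖₊ : ENNReal)) (1 : ℂ) h1
      simpa [specRad, spectralRadius] using this
    exact absurd hρ hle.not_gt
  have hX : IsUnit X := by
    have h2 : X * (Gᵀ * G) * (Gᵀ * G)⁻¹ = X :=
      Matrix.mul_nonsing_inv_cancel_right _ _ ((Matrix.isUnit_iff_isUnit_det _).mp hGtG)
    rw [← h2, ← Matrix.mul_assoc]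
    exact hFG.mul (Matrix.isUnit_nonsing_inv_iff.mpr hGtG)
  calc (X * Gᵀ * G)⁻¹ * (X * Gᵀ)
      = (X * (Gᵀ * G))⁻¹ * (X * Gᵀ) := by rw [Matrix.mul_assoc]
    _ = (Gᵀ * G)⁻¹ * (X⁻¹ * X) * Gᵀ := by
        rw [Matrix.mul_inv_rev]
        simp [Matrix.mul_assoc]
    _ = (Gᵀ * G)⁻¹ * Gᵀ := by
        rw [Matrix.nonsing_inv_mul _ ((Matrix.isUnit_iff_isUnit_det _).mp hX), Matrix.mul_one]
end

section
/- Let G ∈ ℝ^{p×q} have full row rank, Y_d ∈ ℝ^p, and let F ∈ ℝ^{q×p} satisfy ρ(I_p − G·F) < 1 (so G·F is invertible). Then the iteration U_{k+1} = (I_q − F·G)·U_k + F·Y_d with initial vector U_0 converges to U_∞ = [I_q − F·(G·F)^{-1}·G]·U_0 + F·(G·F)^{-1}·Y_d, and G·U_∞ = Y_d. -/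
/-!
Put `B = I_p − G·F`. By Gelfand's formula `ρ(B) < 1` forces `B ^ k → 0`, and `1 ∉ σ(B)` makes
`G·F = I_p − B` invertible. The candidate limit `U_∞` then solves `G·U_∞ = Y_d`, hence is a fixed
point of the iteration, so `U_k − U_∞ = (I_q − F·G) ^ k (U_0 − U_∞)`. Since
`U_0 − U_∞ = F·w` with `w = (G·F)⁻¹·(G·U_0 − Y_d)`, the intertwining identity
`(I_q − F·G) ^ k · F = F · B ^ k` turns the error into `F · B ^ k · w → 0`.
-/

open Matrix Filter

open scoped ENNReal Topology

theorem tendsto_pow_atTop_nhds_zero_of_spectralRadius_lt_one {A : Type*} [NormedRing A]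
    [NormedAlgebra ℂ A] [CompleteSpace A] {a : A} (h : spectralRadius ℂ a < 1) :
    Tendsto (a ^ ·) atTop (𝓝 0) := by
  obtain ⟨r, hρr, hr1⟩ := ENNReal.lt_iff_exists_nnreal_btwn.mp h
  have hroot : ∀ᶠ k : ℕ in atTop, (‖a ^ k‖₊ : ℝ≥0∞) ^ (1 / (k : ℝ)) < r :=
    (spectrum.pow_nnnorm_pow_one_div_tendsto_nhds_spectralRadius a).eventually_lt_const hρr
  refine squeeze_zero_norm' ?_ (tendsto_pow_atTop_nhds_zero_of_lt_one r.coe_nonneg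
    (by exact_mod_cast hr1))
  filter_upwards [hroot, eventually_ne_atTop 0] with k hk hk0
  have : (‖a ^ k‖₊ : ℝ≥0∞) ≤ (r : ℝ≥0∞) ^ k := by
    simpa [← ENNReal.rpow_mul_natCast, hk0] using
      ENNReal.rpow_le_rpow (z := k) hk.le (by positivity)
  exact_mod_cast this

namespace Matrix

theorem one_sub_mul_pow_mul {m n R : Type*} [Fintype m] [Fintype n] [DecidableEq m]
    [DecidableEq n] [CommRing R] (F : Matrix m n R) (G : Matrix n m R) (k : ℕ) :
    (1 - F * G) ^ k * F = F * (1 - G * F) ^ k := by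
  induction k with
  | zero => simp
  | succ k ih =>
    have hcomm : (1 - F * G) * F = F * (1 - G * F) := by
      simp only [Matrix.sub_mul, Matrix.mul_sub, Matrix.one_mul, Matrix.mul_one, Matrix.mul_assoc]
    rw [pow_succ, Matrix.mul_assoc, hcomm, ← Matrix.mul_assoc, ih, Matrix.mul_assoc, ← pow_succ]

theorem iterate_sub_eq_pow_mulVec {n R : Type*} [Fintype n] [DecidableEq n] [CommRing R]
    {A : Matrix n n R} {b x : n → R} {U : ℕ → n → R}
    (hU : ∀ k, U (k + 1) = A *ᵥ U k + b) (hx : A *ᵥ x + b = x) (k : ℕ) :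
    U k - x = (A ^ k) *ᵥ (U 0 - x) := by
  induction k with
  | zero => simp
  | succ k ih =>
    conv_lhs => rw [hU, ← hx]
    rw [add_sub_add_right_eq_sub, ← mulVec_sub, ih, mulVec_mulVec, ← pow_succ']

section SpecRad

variable {n : ℕ} {A : Matrix (Fin n) (Fin n) ℝ}

theorem isUnit_one_sub_of_specRad_lt_one (h : specRad A < 1) : IsUnit (1 - A) := by
  have h1 : (1 : ℂ) ∈ resolventSet ℂ (A.map (algebraMap ℝ ℂ)) :=
    spectrum.mem_resolventSet_of_spectralRadius_lt (by simpa [specRad] using h)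
  rw [resolventSet, Set.mem_ofPred_eq, map_one, isUnit_iff_isUnit_det] at h1
  rw [isUnit_iff_isUnit_det, isUnit_iff_ne_zero]
  rintro h0
  have := (algebraMap ℝ ℂ).map_det (1 - A)
  rw [h0, map_zero, map_sub, map_one, RingHom.mapMatrix_apply] at this
  exact h1.ne_zero this.symm

attribute [local instance] Matrix.linftyOpNormedAddCommGroup Matrix.linftyOpNormedRing
  Matrix.linftyOpNormedAlgebra

theorem tendsto_pow_atTop_nhds_zero_of_specRad_lt_one (h : specRad A < 1) :
    Tendsto (A ^ ·) atTop (𝓝 0) := by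
  have hC : Tendsto ((A.map (algebraMap ℝ ℂ)) ^ ·) atTop (𝓝 0) :=
    tendsto_pow_atTop_nhds_zero_of_spectralRadius_lt_one h
  have hre : Continuous fun M : Matrix (Fin n) (Fin n) ℂ => M.map Complex.re :=
    continuous_id.matrix_map Complex.continuous_re
  convert (hre.tendsto 0).comp hC using 1
  · ext k : 1
    change A ^ k = ((A.map (algebraMap ℝ ℂ)) ^ k).map Complex.re
    rw [← RingHom.mapMatrix_apply, ← map_pow, RingHom.mapMatrix_apply, Matrix.map_map]
    ext i j
    simp
  · simp

end SpecRad

end Matrix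

theorem stmt9_general {p q : ℕ} (G : Matrix (Fin p) (Fin q) ℝ) (F : Matrix (Fin q) (Fin p) ℝ)
    (Yd : Fin p → ℝ) (hρ : specRad (1 - G * F) < 1)
    (U : ℕ → Fin q → ℝ)
    (hU : ∀ k, U (k + 1) = (1 - F * G).mulVec (U k) + F.mulVec Yd) :
    Tendsto U atTop
        (nhds ((1 - F * (G * F)⁻¹ * G).mulVec (U 0) + (F * (G * F)⁻¹).mulVec Yd)) ∧
      G.mulVec ((1 - F * (G * F)⁻¹ * G).mulVec (U 0) + (F * (G * F)⁻¹).mulVec Yd) = Yd := by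
  have hdet : IsUnit (G * F).det := by
    simpa [isUnit_iff_isUnit_det] using isUnit_one_sub_of_specRad_lt_one hρ
  set Uinf := (1 - F * (G * F)⁻¹ * G) *ᵥ U 0 + (F * (G * F)⁻¹) *ᵥ Yd
  have hsol : G *ᵥ Uinf = Yd := by
    simp only [Uinf, mulVec_add, mulVec_mulVec, Matrix.mul_sub, Matrix.mul_one,
      ← Matrix.mul_assoc, mul_nonsing_inv _ hdet, Matrix.one_mul, sub_self, zero_mulVec,
      one_mulVec, zero_add]
  have hfix : (1 - F * G) *ᵥ Uinf + F *ᵥ Yd = Uinf := by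
    rw [sub_mulVec, one_mulVec, ← mulVec_mulVec, hsol, sub_add_cancel]
  set w := (G * F)⁻¹ *ᵥ (G *ᵥ U 0 - Yd)
  have hinit : U 0 - Uinf = F *ᵥ w := by
    simp only [Uinf, w, sub_mulVec, one_mulVec, mulVec_sub, mulVec_mulVec, Matrix.mul_assoc]
    abel
  have herr : ∀ k, U k - Uinf = F *ᵥ ((1 - G * F) ^ k *ᵥ w) := fun k => by
    rw [iterate_sub_eq_pow_mulVec hU hfix, hinit, mulVec_mulVec, one_sub_mul_pow_mul,
      ← mulVec_mulVec]
  have hcont : Continuous fun M : Matrix (Fin p) (Fin p) ℝ => F *ᵥ (M *ᵥ w) :=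
    continuous_const.matrix_mulVec (continuous_id.matrix_mulVec continuous_const)
  refine ⟨tendsto_sub_nhds_zero_iff.mp ?_, hsol⟩
  have hlim := (hcont.tendsto 0).comp (tendsto_pow_atTop_nhds_zero_of_specRad_lt_one hρ)
  rw [zero_mulVec, mulVec_zero] at hlim
  exact hlim.congr fun k => (herr k).symm

/-- For `G` of full row rank and `ρ(I_p − G·F) < 1`, the iteration
`U_{k+1} = (I_q − F·G)·U_k + F·Y_d` converges to
`U_∞ = [I_q − F·(G·F)⁻¹·G]·U_0 + F·(G·F)⁻¹·Y_d`, which satisfies `G·U_∞ = Y_d`. -/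
theorem stmt9 {p q : ℕ} (G : Matrix (Fin p) (Fin q) ℝ) (F : Matrix (Fin q) (Fin p) ℝ)
    (Yd : Fin p → ℝ) (hrank : G.rank = p) (hρ : specRad (1 - G * F) < 1)
    (U : ℕ → Fin q → ℝ)
    (hU : ∀ k, U (k + 1) = (1 - F * G).mulVec (U k) + F.mulVec Yd) :
    Tendsto U atTop
        (nhds ((1 - F * (G * F)⁻¹ * G).mulVec (U 0) + (F * (G * F)⁻¹).mulVec Yd)) ∧
      G.mulVec ((1 - F * (G * F)⁻¹ * G).mulVec (U 0) + (F * (G * F)⁻¹).mulVec Yd) = Yd :=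
  stmt9_general G F Yd hρ U hU
end

section
/- Let G = H·Ĝ with H ∈ ℝ^{p×m} of full column rank and Ĝ ∈ ℝ^{m×q} of full row rank. Then for every Y_d ∈ ℝ^p, min over U ∈ ℝ^q of ‖Y_d − G·U‖₂ equals min over Ω̂ ∈ ℝ^m of ‖Y_d − H·Ω̂‖₂, and U is a minimizer of ‖Y_d − G·U‖₂ if and only if Ĝ·U = (Hᵀ·H)^{-1}·Hᵀ·Y_d. -/
open Matrix

/-- Euclidean norm of a vector in `ℝ^n`. -/
noncomputable def enorm' {n : ℕ} (v : Fin n → ℝ) : ℝ := Real.sqrt (∑ i, v i ^ 2)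


lemma enorm'_le_iff {n : ℕ} (u v : Fin n → ℝ) :
    enorm' u ≤ enorm' v ↔ (∑ i, u i ^ 2) ≤ (∑ i, v i ^ 2) := by
  unfold enorm'
  rw [Real.sqrt_le_sqrt_iff (by positivity)]

lemma sq_sum_key {p m : ℕ} (H : Matrix (Fin p) (Fin m) ℝ)
    (hinj : Function.Injective H.mulVec) (hu : IsUnit (Hᵀ * H).det) (Yd : Fin p → ℝ)
    (W : Fin m → ℝ) :
    (∑ i, (Yd - H.mulVec ((Hᵀ * H)⁻¹.mulVec (Hᵀ.mulVec Yd))) i ^ 2)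
      + (∑ i, (H.mulVec ((Hᵀ * H)⁻¹.mulVec (Hᵀ.mulVec Yd) - W)) i ^ 2)
      = ∑ i, (Yd - H.mulVec W) i ^ 2 := by
  set Ws := (Hᵀ * H)⁻¹.mulVec (Hᵀ.mulVec Yd) with hWs
  have hnormal : (Hᵀ * H).mulVec Ws = Hᵀ.mulVec Yd := by
    rw [hWs, mulVec_mulVec, Matrix.mul_nonsing_inv _ hu, one_mulVec]
  have horth : Hᵀ.mulVec (Yd - H.mulVec Ws) = 0 := by
    rw [mulVec_sub, mulVec_mulVec, hnormal, sub_self]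
  have hcross : (Yd - H.mulVec Ws) ⬝ᵥ H.mulVec (Ws - W) = 0 := by
    rw [dotProduct_mulVec, ← mulVec_transpose, horth, zero_dotProduct]
  have hdecomp : Yd - H.mulVec W = (Yd - H.mulVec Ws) + H.mulVec (Ws - W) := by
    rw [mulVec_sub]; abel
  rw [hdecomp]
  have : ∀ i, ((Yd - H.mulVec Ws) + H.mulVec (Ws - W)) i ^ 2
      = (Yd - H.mulVec Ws) i ^ 2 + 2 * ((Yd - H.mulVec Ws) i * (H.mulVec (Ws - W)) i)
        + (H.mulVec (Ws - W)) i ^ 2 := by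
    intro i; simp only [Pi.add_apply]; ring
  simp only [this, Finset.sum_add_distrib, ← Finset.mul_sum]
  have := hcross
  rw [dotProduct] at this
  rw [this]
  ring


/-- For a rank factorization `G = H·Ĝ`, the least squares value of `‖Y_d − G·U‖₂`
equals that of `‖Y_d − H·Ω̂‖₂`, and `U` is a minimizer iff
`Ĝ·U = (Hᵀ·H)⁻¹·Hᵀ·Y_d`. -/
theorem stmt13 {p q m : ℕ} (G : Matrix (Fin p) (Fin q) ℝ)
    (H : Matrix (Fin p) (Fin m) ℝ) (Gh : Matrix (Fin m) (Fin q) ℝ)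
    (hfac : G = H * Gh) (hH : H.rank = m) (hGh : Gh.rank = m) (Yd : Fin p → ℝ) :
    (⨅ U : Fin q → ℝ, enorm' (Yd - G.mulVec U)) =
      (⨅ W : Fin m → ℝ, enorm' (Yd - H.mulVec W)) ∧
    ∀ U : Fin q → ℝ,
      (∀ V : Fin q → ℝ, enorm' (Yd - G.mulVec U) ≤ enorm' (Yd - G.mulVec V)) ↔
        Gh.mulVec U = (Hᵀ * H)⁻¹.mulVec (Hᵀ.mulVec Yd) := by
  -- Gh surjective
  have hGhsurj : Function.Surjective Gh.mulVec := by
    have : LinearMap.range Gh.mulVecLin = ⊤ := by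
      apply Submodule.eq_top_of_finrank_eq
      rw [← Matrix.rank, hGh]
      simp [Module.finrank_pi]
    intro y
    have : y ∈ LinearMap.range Gh.mulVecLin := this ▸ Submodule.mem_top
    obtain ⟨x, hx⟩ := this
    exact ⟨x, hx⟩
  -- H injective
  have hHinj : Function.Injective H.mulVec := by
    have hker : LinearMap.ker H.mulVecLin = ⊥ := by
      have h1 := LinearMap.finrank_range_add_finrank_ker H.mulVecLin
      rw [show Module.finrank ℝ (LinearMap.range H.mulVecLin) = m from hH] at h1
      simp only [Module.finrank_pi, Fintype.card_fin] at h1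
      have : Module.finrank ℝ (LinearMap.ker H.mulVecLin) = 0 := by omega
      exact Submodule.finrank_eq_zero.mp this
    intro a b hab
    have : H.mulVecLin (a - b) = 0 := by
      simp [mulVecLin_apply, mulVec_sub, hab]
    have := hker ▸ LinearMap.mem_ker.mpr this
    simpa [sub_eq_zero] using this
  -- HᵀH invertible
  have hunit : IsUnit (Hᵀ * H) := by
    rw [← Matrix.mulVec_injective_iff_isUnit]
    intro a b hab
    apply hHinj
    have : LinearMap.ker (Hᵀ * H).mulVecLin = LinearMap.ker H.mulVecLin :=
      Matrix.ker_mulVecLin_transpose_mul_self H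
    have h0 : (Hᵀ * H).mulVec (a - b) = 0 := by rw [mulVec_sub, hab, sub_self]
    have : (a - b) ∈ LinearMap.ker H.mulVecLin := this ▸ LinearMap.mem_ker.mpr h0
    have h2 : H.mulVec (a - b) = 0 := this
    rw [mulVec_sub, sub_eq_zero] at h2
    exact h2
  have hudet : IsUnit (Hᵀ * H).det := (Matrix.isUnit_iff_isUnit_det _).mp hunit
  set Ws := (Hᵀ * H)⁻¹.mulVec (Hᵀ.mulVec Yd) with hWs
  have hGf : ∀ U, G.mulVec U = H.mulVec (Gh.mulVec U) := by
    intro U; rw [hfac, ← mulVec_mulVec]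
  -- Ws minimizes, strictly unless equal
  have hmin : ∀ W, ∑ i, (Yd - H.mulVec Ws) i ^ 2 ≤ ∑ i, (Yd - H.mulVec W) i ^ 2 := by
    intro W
    have := sq_sum_key H hHinj hudet Yd W
    nlinarith [Finset.sum_nonneg (fun i (_ : i ∈ Finset.univ) =>
      sq_nonneg ((H.mulVec (Ws - W)) i))]
  have huniq : ∀ W, (∑ i, (Yd - H.mulVec W) i ^ 2 ≤ ∑ i, (Yd - H.mulVec Ws) i ^ 2) → W = Ws := by
    intro W hle
    have hkey := sq_sum_key H hHinj hudet Yd W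
    have h0 : ∑ i, (H.mulVec (Ws - W)) i ^ 2 = 0 := by nlinarith [hmin W]
    have : ∀ i ∈ Finset.univ, (H.mulVec (Ws - W)) i ^ 2 = 0 := by
      intro i _
      have := Finset.sum_eq_zero_iff_of_nonneg
        (fun i (_ : i ∈ (Finset.univ : Finset (Fin p))) =>
          sq_nonneg ((H.mulVec (Ws - W)) i)) |>.mp h0
      exact this i (Finset.mem_univ i)
    have hz : H.mulVec (Ws - W) = 0 := by
      funext i
      exact pow_eq_zero_iff (by norm_num) |>.mp (this i (Finset.mem_univ i))
    have : Ws - W = 0 := by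
      apply hHinj
      rw [hz, mulVec_zero]
    have := sub_eq_zero.mp this
    exact this.symm
  constructor
  · simp only [hGf]
    exact hGhsurj.iInf_comp (fun W => enorm' (Yd - H.mulVec W))
  · intro U
    constructor
    · intro hall
      apply huniq
      obtain ⟨V, hV⟩ := hGhsurj Ws
      have := hall V
      rw [enorm'_le_iff] at this
      rw [hGf, hGf, hV] at this
      exact this
    · intro hU V
      rw [enorm'_le_iff, hGf, hGf, hU]
      exact hmin _
end

section
/- Let G = H·Ĝ with H of full column rank and Ĝ of full row rank, and let F ∈ ℝ^{q×p} be such that Ĝ·F·H is invertible. Then F·H·(Hᵀ·G·F·H)^{-1}·Hᵀ·Y_d is a least squares solution of Y_d = G·U, i.e., Ĝ·[F·H·(Hᵀ·G·F·H)^{-1}·Hᵀ·Y_d] = (Hᵀ·H)^{-1}·Hᵀ·Y_d. -/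
open Matrix

lemma aux_isUnit_of_rank {m : ℕ} (A : Matrix (Fin m) (Fin m) ℝ) (h : A.rank = m) :
    IsUnit A := by
  rw [← Matrix.mulVec_surjective_iff_isUnit]
  have hr : LinearMap.range A.mulVecLin = ⊤ := by
    apply Submodule.eq_top_of_finrank_eq
    rw [Module.finrank_pi]
    simpa [Matrix.rank] using h
  intro v
  exact LinearMap.range_eq_top.mp hr v

/-- For a rank factorization `G = H·Ĝ` with `Ĝ·F·H` invertible,
`F·H·(Hᵀ·G·F·H)⁻¹·Hᵀ·Y_d` is a least squares solution of `Y_d = G·U`, i.e.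
`Ĝ·[F·H·(Hᵀ·G·F·H)⁻¹·Hᵀ·Y_d] = (Hᵀ·H)⁻¹·Hᵀ·Y_d`. -/
theorem stmt15 {p q m : ℕ} (G : Matrix (Fin p) (Fin q) ℝ)
    (H : Matrix (Fin p) (Fin m) ℝ) (Gh : Matrix (Fin m) (Fin q) ℝ)
    (F : Matrix (Fin q) (Fin p) ℝ)
    (hfac : G = H * Gh) (hH : H.rank = m) (hGh : Gh.rank = m)
    (hinv : IsUnit (Gh * F * H)) (Yd : Fin p → ℝ) :
    Gh.mulVec ((F * H * (Hᵀ * G * F * H)⁻¹ * Hᵀ).mulVec Yd) =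
      (Hᵀ * H)⁻¹.mulVec (Hᵀ.mulVec Yd) := by
  have hHtH : IsUnit (Hᵀ * H) := by
    apply aux_isUnit_of_rank
    rw [Matrix.rank_transpose_mul_self]
    exact hH
  have hfac2 : Hᵀ * G * F * H = (Hᵀ * H) * (Gh * F * H) := by
    rw [hfac]; simp only [Matrix.mul_assoc]
  have hkey : Gh * (F * H * (Hᵀ * G * F * H)⁻¹ * Hᵀ) = (Hᵀ * H)⁻¹ * Hᵀ := by
    rw [hfac2, Matrix.mul_inv_rev]
    have h1 : Gh * (F * H * ((Gh * F * H)⁻¹ * (Hᵀ * H)⁻¹) * Hᵀ)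
        = (Gh * F * H) * (Gh * F * H)⁻¹ * ((Hᵀ * H)⁻¹ * Hᵀ) := by simp only [Matrix.mul_assoc]
    rw [h1, Matrix.mul_nonsing_inv _ ((Matrix.isUnit_iff_isUnit_det _).mp hinv), Matrix.one_mul]
  rw [Matrix.mulVec_mulVec, Matrix.mulVec_mulVec, hkey]
end

section
/- Let G = H·Ĝ with H of full column rank and Ĝ of full row rank, and let σ satisfy 0 < σ < 2/λ_max(Gᵀ·G). Then with F = σ·Gᵀ, all eigenvalues of Ĝ·F·H are real and positive, ρ(I_m − Ĝ·F·H) < 1, and ‖I_q − σ·Gᵀ·G‖₂ ≤ 1, so the iteration U_{k+1} = (I_q − F·G)·U_k + F·Y_d satisfies ‖U_{k+1} − U_∞‖₂ ≤ ‖U_k − U_∞‖₂ for every fixed point U_∞ of the iteration. -/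
/-!
Write `A = Gᵀ·G` and `σ·λ_j` for the eigenvalues of `σ·A`; the bound on `σ` puts every
`σ·λ_j` in `[0, 2)`. In the orthonormal eigenbasis of `A` the matrix `I − σ·A` acts diagonally
with entries `1 − σ·λ_j ∈ (−1, 1]`, so it does not increase the Euclidean norm; since the error of
the iteration is multiplied by `I − F·G = I − σ·A` at each step, it is nonincreasing.

The matrix `Ĝ·F·H` is a product `Ĝ·(F·H)` whose reverse product `(F·H)·Ĝ` is `σ·A`, so the two
share their nonzero eigenvalues. Full rank of `H` and `Ĝ` makes
`Ĝ·F·H = σ·(Ĝ·Ĝᵀ)·(Hᵀ·H)` invertible, so all its eigenvalues are nonzero eigenvalues `σ·λ_j`,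
hence lie in `(0, 2)`, and those of `I − Ĝ·F·H` lie in `(−1, 1)`.
-/

open Matrix

theorem enorm'_eq_norm {n : ℕ} (v : Fin n → ℝ) : enorm' v = ‖WithLp.toLp 2 v‖ := by
  simp [enorm', EuclideanSpace.norm_eq]

theorem EuclideanSpace.norm_toLp_mul_le {ι : Type*} [Fintype ι] (c x : ι → ℝ)
    (hc : ∀ i, |c i| ≤ 1) : ‖WithLp.toLp 2 (c * x)‖ ≤ ‖WithLp.toLp 2 x‖ := by
  simp only [EuclideanSpace.norm_eq, Pi.mul_apply, norm_mul, Real.norm_eq_abs]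
  gcongr with i
  exact mul_le_of_le_one_left (abs_nonneg _) (hc i)

theorem OrthonormalBasis.norm_apply_le_of_apply_eq_smul {ι E : Type*} [Fintype ι]
    [NormedAddCommGroup E] [InnerProductSpace ℝ E] (b : OrthonormalBasis ι ℝ E)
    (T : E →ₗ[ℝ] E) (c : ι → ℝ) (hT : ∀ i, T (b i) = c i • b i) (hc : ∀ i, |c i| ≤ 1)
    (v : E) : ‖T v‖ ≤ ‖v‖ := by
  have hTv : T v = b.repr.symm (WithLp.toLp 2 (c * b.repr v)) := by
    conv_lhs => rw [← b.sum_repr v]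
    rw [← b.sum_repr_symm, map_sum]
    simp [hT, smul_smul, mul_comm]
  rw [hTv, LinearIsometryEquiv.norm_map, ← b.repr.norm_map v]
  exact EuclideanSpace.norm_toLp_mul_le c _ hc

theorem enorm'_mulVec_le_of_eigenbasis {n : ℕ} (B : Matrix (Fin n) (Fin n) ℝ)
    (b : OrthonormalBasis (Fin n) ℝ (EuclideanSpace ℝ (Fin n))) (c : Fin n → ℝ)
    (hB : ∀ j, B *ᵥ b j = c j • b j) (hc : ∀ j, |c j| ≤ 1) (v : Fin n → ℝ) :
    enorm' (B *ᵥ v) ≤ enorm' v := by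
  rw [enorm'_eq_norm, enorm'_eq_norm]
  change ‖Matrix.toLpLin 2 2 B (WithLp.toLp 2 v)‖ ≤ _
  refine b.norm_apply_le_of_apply_eq_smul _ c (fun j => ?_) hc _
  ext1
  simp [Matrix.ofLp_toLpLin, hB]

theorem Matrix.IsHermitian.one_sub_smul_mulVec_eigenvectorBasis {n : Type*} [Fintype n]
    [DecidableEq n] {A : Matrix n n ℝ} (hA : A.IsHermitian) (σ : ℝ) (j : n) :
    (1 - σ • A) *ᵥ hA.eigenvectorBasis j =
      (1 - σ * hA.eigenvalues j) • WithLp.ofLp (hA.eigenvectorBasis j) := by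
  rw [sub_mulVec, one_mulVec, smul_mulVec, hA.mulVec_eigenvectorBasis, smul_smul, sub_smul,
    one_smul]

theorem Matrix.PosSemidef.mul_eigenvalues_mem_Ico {n : Type*} [Fintype n] [DecidableEq n]
    {A : Matrix n n ℝ} (hA : A.PosSemidef) {σ : ℝ} (hσ0 : 0 < σ)
    (hσ2 : σ < 2 / ⨆ i, hA.isHermitian.eigenvalues i) (j : n) :
    σ * hA.isHermitian.eigenvalues j ∈ Set.Ico 0 2 := by
  have hle_sup : hA.isHermitian.eigenvalues j ≤ ⨆ i, hA.isHermitian.eigenvalues i :=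
    le_ciSup (Finite.bddAbove_range _) j
  have hsup_pos : 0 < ⨆ i, hA.isHermitian.eigenvalues i := by
    by_contra! h
    exact (div_nonpos_of_nonneg_of_nonpos zero_le_two h).not_gt (hσ0.trans hσ2)
  have hσsup : σ * ⨆ i, hA.isHermitian.eigenvalues i < 2 := (lt_div_iff₀ hsup_pos).mp hσ2
  exact ⟨mul_nonneg hσ0.le (hA.eigenvalues_nonneg j),
    (mul_le_mul_of_nonneg_left hle_sup hσ0.le).trans_lt hσsup⟩

theorem Matrix.isUnit_of_rank_eq_card {K n : Type*} [Field K] [Fintype n] [DecidableEq n]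
    (A : Matrix n n K) (h : A.rank = Fintype.card n) : IsUnit A := by
  rw [← Matrix.mulVec_surjective_iff_isUnit]
  refine (LinearMap.range_eq_top (f := A.mulVecLin)).mp (Submodule.eq_top_of_finrank_eq ?_)
  rw [← Matrix.rank, h, Module.finrank_fintype_fun_eq_card]

theorem Matrix.isUnit_mul_smul_transpose_mul {p m q : Type*} [Fintype p] [Fintype m]
    [DecidableEq m] [Fintype q] (H : Matrix p m ℝ) (Gh : Matrix m q ℝ)
    (hH : H.rank = Fintype.card m) (hGh : Gh.rank = Fintype.card m) {σ : ℝ} (hσ : σ ≠ 0) :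
    IsUnit (Gh * (σ • (H * Gh)ᵀ) * H) := by
  have hGhGhT : IsUnit (Gh * Ghᵀ) := isUnit_of_rank_eq_card _ (by rw [rank_self_mul_transpose, hGh])
  have hHTH : IsUnit (Hᵀ * H) := isUnit_of_rank_eq_card _ (by rw [rank_transpose_mul_self, hH])
  have hprod : Gh * (σ • (H * Gh)ᵀ) * H = σ • (Gh * Ghᵀ * (Hᵀ * H)) := by
    simp only [transpose_mul, Matrix.mul_smul, Matrix.smul_mul, Matrix.mul_assoc]
  rw [hprod]
  exact (hGhGhT.mul hHTH).smul (Units.mk0 σ hσ)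

open Polynomial in
theorem Matrix.mem_spectrum_mul_comm {K m n : Type*} [Field K] [Fintype m] [DecidableEq m]
    [Fintype n] [DecidableEq n] (A : Matrix m n K) (B : Matrix n m K) {z : K} (hz : z ≠ 0)
    (h : z ∈ spectrum K (A * B)) : z ∈ spectrum K (B * A) := by
  rw [mem_spectrum_iff_isRoot_charpoly, IsRoot] at h ⊢
  have := congrArg (eval z) (charpoly_mul_comm' A B)
  simp only [eval_mul, eval_pow, eval_X, h, mul_zero] at this
  exact (mul_eq_zero.mp this.symm).resolve_left (pow_ne_zero _ hz)

open Polynomial in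
theorem Matrix.IsHermitian.exists_eq_eigenvalue_of_mem_spectrum_map {n : Type*} [Fintype n]
    [DecidableEq n] {A : Matrix n n ℝ} (hA : A.IsHermitian) {z : ℂ}
    (hz : z ∈ spectrum ℂ (A.map (algebraMap ℝ ℂ))) : ∃ j, z = hA.eigenvalues j := by
  rw [mem_spectrum_iff_isRoot_charpoly, charpoly_map, hA.charpoly_eq, IsRoot,
    Polynomial.map_prod, eval_prod, Finset.prod_eq_zero_iff] at hz
  obtain ⟨j, -, hj⟩ := hz
  exact ⟨j, by simpa [sub_eq_zero] using hj⟩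

theorem Matrix.IsHermitian.exists_eq_mul_eigenvalue_of_mem_spectrum_map_smul {n : Type*}
    [Fintype n] [DecidableEq n] {A : Matrix n n ℝ} (hA : A.IsHermitian) {c : ℝ} (hc : c ≠ 0)
    {z : ℂ} (hz : z ∈ spectrum ℂ ((c • A).map (algebraMap ℝ ℂ))) :
    ∃ j, z = c * hA.eigenvalues j := by
  have hmap : (c • A).map (algebraMap ℝ ℂ) =
      Units.mk0 (c : ℂ) (by exact_mod_cast hc) • A.map (algebraMap ℝ ℂ) := by
    ext i j
    simp
  rw [hmap, spectrum.unit_smul_eq_smul, Set.mem_smul_set] at hz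
  obtain ⟨w, hw, rfl⟩ := hz
  obtain ⟨j, rfl⟩ := hA.exists_eq_eigenvalue_of_mem_spectrum_map hw
  exact ⟨j, by simp⟩

theorem Matrix.exists_eq_mul_eigenvalue_of_mem_spectrum_map_mul {m n : Type*} [Fintype m]
    [DecidableEq m] [Fintype n] [DecidableEq n] (A : Matrix m n ℝ) (B : Matrix n m ℝ)
    {C : Matrix n n ℝ} (hC : C.IsHermitian) {c : ℝ} (hc : c ≠ 0) (hBA : B * A = c • C)
    {z : ℂ} (hz0 : z ≠ 0) (hz : z ∈ spectrum ℂ ((A * B).map (algebraMap ℝ ℂ))) :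
    ∃ j, z = c * hC.eigenvalues j := by
  rw [Matrix.map_mul] at hz
  have hz' := mem_spectrum_mul_comm _ _ hz0 hz
  rw [← Matrix.map_mul, hBA] at hz'
  exact hC.exists_eq_mul_eigenvalue_of_mem_spectrum_map_smul hc hz'

theorem spectrum.one_sub_mem_of_mem_one_sub {R A : Type*} [CommRing R] [Ring A] [Algebra R A]
    {a : A} {z : R} (hz : z ∈ spectrum R (1 - a)) : 1 - z ∈ spectrum R a := by
  rw [← map_one (algebraMap R A), ← spectrum.singleton_sub_eq, Set.singleton_sub] at hz
  obtain ⟨w, hw, rfl⟩ := hz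
  simpa using hw

theorem spectralRadius_lt_of_forall_nnnorm_lt {𝕜 A : Type*} [NormedField 𝕜] [Ring A]
    [Algebra 𝕜 A] {a : A} (hfin : (spectrum 𝕜 a).Finite) {r : NNReal} (hr : 0 < r)
    (h : ∀ z ∈ spectrum 𝕜 a, ‖z‖₊ < r) : spectralRadius 𝕜 a < r := by
  set r' := hfin.toFinset.sup (‖·‖₊)
  have hr' : r' < r := Finset.sup_lt_iff hr |>.mpr fun z hz => h z (hfin.mem_toFinset.mp hz)
  refine lt_of_le_of_lt (iSup₂_le fun z hz => ?_) (ENNReal.coe_lt_coe.mpr hr')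
  exact ENNReal.coe_le_coe.mpr (Finset.le_sup (f := (‖·‖₊)) (hfin.mem_toFinset.mpr hz))

theorem exists_ne_zero_and_eq_mul_eigenvalue_of_mem_spectrum {p m q : Type*} [Fintype p]
    [Fintype m] [DecidableEq m] [Fintype q] [DecidableEq q] (H : Matrix p m ℝ)
    (Gh : Matrix m q ℝ) (hH : H.rank = Fintype.card m) (hGh : Gh.rank = Fintype.card m)
    (hGG : ((H * Gh)ᵀ * (H * Gh)).IsHermitian) {σ : ℝ} (hσ : σ ≠ 0) {z : ℂ}
    (hz : z ∈ spectrum ℂ ((Gh * (σ • (H * Gh)ᵀ) * H).map (algebraMap ℝ ℂ))) :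
    ∃ j, z ≠ 0 ∧ z = σ * hGG.eigenvalues j := by
  have hz0 : z ≠ 0 := by
    rintro rfl
    exact (spectrum.zero_notMem_iff ℂ).mpr
      ((isUnit_mul_smul_transpose_mul H Gh hH hGh hσ).map (algebraMap ℝ ℂ).mapMatrix) hz
  obtain ⟨j, hj⟩ := exists_eq_mul_eigenvalue_of_mem_spectrum_map_mul Gh (σ • (H * Gh)ᵀ * H)
    hGG hσ (by rw [Matrix.mul_assoc, Matrix.smul_mul]) hz0 (by rwa [Matrix.mul_assoc] at hz)
  exact ⟨j, hz0, hj⟩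

theorem Matrix.sub_eq_mulVec_sub_of_eq_mulVec_add {n : Type*} [Fintype n] (M : Matrix n n ℝ)
    (c : n → ℝ) {u u' w : n → ℝ} (hu : u' = M *ᵥ u + c) (hw : w = M *ᵥ w + c) :
    u' - w = M *ᵥ (u - w) := by
  rw [hu, mulVec_sub]
  nth_rewrite 1 [hw]
  abel

/-- For a rank factorization `G = H·Ĝ` and `0 < σ < 2/λ_max(Gᵀ·G)`, with
`F = σ·Gᵀ`: all eigenvalues of `Ĝ·F·H` are real and positive,
`ρ(I_m − Ĝ·F·H) < 1`, the spectral norm of `I_q − σ·Gᵀ·G` is at most `1`, and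
the iteration `U_{k+1} = (I_q − F·G)·U_k + F·Y_d` is monotonically
nonexpansive towards any of its fixed points. -/
theorem stmt17 {p q m : ℕ} (G : Matrix (Fin p) (Fin q) ℝ)
    (H : Matrix (Fin p) (Fin m) ℝ) (Gh : Matrix (Fin m) (Fin q) ℝ)
    (hfac : G = H * Gh) (hH : H.rank = m) (hGh : Gh.rank = m)
    (σ : ℝ) (hHerm : (Gᵀ * G).IsHermitian)
    (hσ0 : 0 < σ) (hσ2 : σ < 2 / (⨆ i, hHerm.eigenvalues i))
    (F : Matrix (Fin q) (Fin p) ℝ) (hF : F = σ • Gᵀ) (Yd : Fin p → ℝ)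
    (U : ℕ → Fin q → ℝ)
    (hU : ∀ k, U (k + 1) = (1 - F * G).mulVec (U k) + F.mulVec Yd) :
    (∀ z ∈ spectrum ℂ ((Gh * F * H).map (algebraMap ℝ ℂ)), z.im = 0 ∧ 0 < z.re) ∧
    specRad (1 - Gh * F * H) < 1 ∧
    (∀ v : Fin q → ℝ, enorm' ((1 - σ • (Gᵀ * G)).mulVec v) ≤ enorm' v) ∧
    (∀ Uinf : Fin q → ℝ, Uinf = (1 - F * G).mulVec Uinf + F.mulVec Yd →
      ∀ k, enorm' (U (k + 1) - Uinf) ≤ enorm' (U k - Uinf)) := by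
  subst hfac hF
  have hpsd : ((H * Gh)ᵀ * (H * Gh)).PosSemidef := by
    simpa using posSemidef_conjTranspose_mul_self (H * Gh)
  have hσμ : ∀ j, σ * hHerm.eigenvalues j ∈ Set.Ico 0 2 := hpsd.mul_eigenvalues_mem_Ico hσ0 hσ2
  have hspec : ∀ z ∈ spectrum ℂ ((Gh * (σ • (H * Gh)ᵀ) * H).map (algebraMap ℝ ℂ)),
      ∃ j, 0 < σ * hHerm.eigenvalues j ∧ z = σ * hHerm.eigenvalues j := by
    intro z hz
    obtain ⟨j, hz0, rfl⟩ := exists_ne_zero_and_eq_mul_eigenvalue_of_mem_spectrum H Gh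
      (by simpa using hH) (by simpa using hGh) hHerm hσ0.ne' hz
    exact ⟨j, (hσμ j).1.lt_of_ne (by exact_mod_cast hz0.symm), rfl⟩
  have hnonexp : ∀ v, enorm' ((1 - σ • ((H * Gh)ᵀ * (H * Gh))) *ᵥ v) ≤ enorm' v :=
    enorm'_mulVec_le_of_eigenbasis _ hHerm.eigenvectorBasis _
      (hHerm.one_sub_smul_mulVec_eigenvectorBasis σ)
      fun j => abs_le.mpr ⟨by linarith [(hσμ j).2], by linarith [(hσμ j).1]⟩
  refine ⟨fun z hz => ?_, ?_, hnonexp, fun Uinf hfix k => ?_⟩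
  · obtain ⟨j, hj, rfl⟩ := hspec z hz
    simpa using hj
  · refine spectralRadius_lt_of_forall_nnnorm_lt (Matrix.finite_spectrum _) one_pos fun z hz => ?_
    rw [← RingHom.mapMatrix_apply, map_sub, map_one] at hz
    obtain ⟨j, hj, hzj⟩ := hspec _ (spectrum.one_sub_mem_of_mem_one_sub hz)
    rw [show z = ((1 - σ * hHerm.eigenvalues j : ℝ) : ℂ) by push_cast; linear_combination -hzj,
      Complex.nnnorm_real, ← NNReal.coe_lt_coe, coe_nnnorm, Real.norm_eq_abs, NNReal.coe_one]
    exact abs_lt.mpr ⟨by linarith [(hσμ j).2], by linarith⟩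
  · rw [sub_eq_mulVec_sub_of_eq_mulVec_add _ _ (hU k) hfix, Matrix.smul_mul]
    exact hnonexp _
end
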